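/- The generalized exponential mechanism maximizes expected quality minus scaled KL divergence to the prior: let R be a nonempty finite set, ε > 0, Q : R → ℝ a quality function, and μ a probability distribution on R with μ(r) > 0 for all r ∈ R. Define ν*(r) = μ(r)·exp((ε/2)·Q(r)) / ∑_{r' ∈ R} μ(r')·exp((ε/2)·Q(r')). Then for every probability distribution ν on R, E_{r ∼ ν}[Q(r)] − (2/ε)·D_KL(ν || μ) ≤ E_{r ∼ ν*}[Q(r)] − (2/ε)·D_KL(ν* || μ). -/

import Mathlib

open scoped Classical
open Finset

/-- KL divergence between distributions on a finite set `R`: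
`D_KL(ν||μ) = ∑_r ν(r)·ln(ν(r)/μ(r))` (with the convention `0·ln 0 = 0`,
which holds since in Lean `0 * Real.log x = 0`). -/
noncomputable def klDiv {R : Type*} [Fintype R] (ν μ : R → ℝ) : ℝ :=
  ∑ r : R, ν r * Real.log (ν r / μ r)

/-- The generalized exponential mechanism distribution with prior `μ`, privacy parameter
`ε`, and quality function `Q`: it chooses `r` with probability proportional to
`μ(r)·exp((ε/2)·Q(r))`. -/
noncomputable def genExpDist {R : Type*} [Fintype R] (ε : ℝ) (μ Q : R → ℝ) : R → ℝ :=
  fun r => μ r * Real.exp (ε / 2 * Q r) / ∑ r' : R, μ r' * Real.exp (ε / 2 * Q r')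

/-! The objective `E_ν[Q] - (2/ε) D_KL(ν‖μ)` differs from `(2/ε) log Z`, with `Z` the
normalizing constant of the mechanism, by exactly `(2/ε) D_KL(ν‖ν*)`; Gibbs' inequality
`D_KL ≥ 0`, with equality at `ν = ν*`, then shows that `ν*` is the maximizer. -/

open Real
open InformationTheory (klFun klFun_apply klFun_nonneg)

section KLDiv

variable {R : Type*} [Fintype R]

lemma mul_log_div_eq_mul_klFun_add (x : ℝ) {y : ℝ} (hy : y ≠ 0) :
    x * log (x / y) = y * klFun (x / y) + x - y := by
  rw [klFun_apply]
  field_simp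
  ring

theorem klDiv_nonneg {ν p : R → ℝ} (hν : ∀ r, 0 ≤ ν r) (hp : ∀ r, 0 < p r)
    (hsum : ∑ r, p r ≤ ∑ r, ν r) : 0 ≤ klDiv ν p := by
  have hklFun : 0 ≤ ∑ r, p r * klFun (ν r / p r) :=
    sum_nonneg fun r _ => mul_nonneg (hp r).le (klFun_nonneg (div_nonneg (hν r) (hp r).le))
  have hsplit : klDiv ν p = ∑ r, p r * klFun (ν r / p r) + ∑ r, ν r - ∑ r, p r := by
    simp only [klDiv, mul_log_div_eq_mul_klFun_add _ (hp _).ne', sum_sub_distrib, sum_add_distrib]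
  linarith

@[simp]
theorem klDiv_self (p : R → ℝ) : klDiv p p = 0 := by
  refine sum_eq_zero fun r _ => ?_
  rcases eq_or_ne (p r) 0 with h | h <;> simp [h]

end KLDiv

section GenExpMech

variable {R : Type*} [Fintype R] (ε : ℝ) (μ Q : R → ℝ)

noncomputable def genExpPartition : ℝ :=
  ∑ r, μ r * exp (ε / 2 * Q r)

lemma genExpDist_apply (r : R) :
    genExpDist ε μ Q r = μ r * exp (ε / 2 * Q r) / genExpPartition ε μ Q :=
  rfl

variable {μ}

lemma genExpPartition_pos [Nonempty R] (hμ : ∀ r, 0 < μ r) : 0 < genExpPartition ε μ Q :=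
  sum_pos (fun r _ => mul_pos (hμ r) (exp_pos _)) univ_nonempty

lemma genExpDist_pos [Nonempty R] (hμ : ∀ r, 0 < μ r) (r : R) : 0 < genExpDist ε μ Q r :=
  div_pos (mul_pos (hμ r) (exp_pos _)) (genExpPartition_pos ε Q hμ)

lemma sum_genExpDist (hZ : genExpPartition ε μ Q ≠ 0) : ∑ r, genExpDist ε μ Q r = 1 := by
  simp only [genExpDist_apply, ← sum_div]
  exact div_self hZ

lemma klDiv_genExpDist [Nonempty R] (hμ : ∀ r, 0 < μ r) (w : R → ℝ) :
    klDiv w (genExpDist ε μ Q) = klDiv w μ + (∑ r, w r) * log (genExpPartition ε μ Q)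
      - ε / 2 * ∑ r, w r * Q r := by
  have hZ := (genExpPartition_pos ε Q hμ).ne'
  have hterm (r : R) : w r * log (w r / genExpDist ε μ Q r)
      = w r * log (w r / μ r) + w r * log (genExpPartition ε μ Q) - ε / 2 * (w r * Q r) := by
    rcases eq_or_ne (w r) 0 with hw | hw
    · simp [hw]
    have hμr := (hμ r).ne'
    rw [genExpDist_apply, log_div hw (div_ne_zero (mul_ne_zero hμr (exp_pos _).ne') hZ),
      log_div (mul_ne_zero hμr (exp_pos _).ne') hZ, log_mul hμr (exp_pos _).ne', log_exp,
      log_div hw hμr]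
    ring
  simp only [klDiv, hterm, sum_sub_distrib, sum_add_distrib, ← sum_mul, ← mul_sum]

lemma expectation_sub_klDiv_eq [Nonempty R] (hε : ε ≠ 0) (hμ : ∀ r, 0 < μ r) {w : R → ℝ}
    (hw : ∑ r, w r = 1) :
    ∑ r, w r * Q r - 2 / ε * klDiv w μ
      = 2 / ε * (log (genExpPartition ε μ Q) - klDiv w (genExpDist ε μ Q)) := by
  rw [klDiv_genExpDist ε Q hμ, hw]
  field_simp
  ring

end GenExpMech

theorem genExpMech_maximizes_general {R : Type*} [Fintype R] [Nonempty R]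
    (ε : ℝ) (hε : 0 < ε) (Q : R → ℝ) (μ : R → ℝ)
    (hμpos : ∀ r, 0 < μ r)
    (ν : R → ℝ) (hν : ∀ r, ν r ∈ Set.Icc (0 : ℝ) 1) (hνsum : ∑ r : R, ν r = 1) :
    (∑ r : R, ν r * Q r) - (2 / ε) * klDiv ν μ
      ≤ (∑ r : R, genExpDist ε μ Q r * Q r) - (2 / ε) * klDiv (genExpDist ε μ Q) μ := by
  have hZ := (genExpPartition_pos ε Q hμpos).ne'
  rw [expectation_sub_klDiv_eq ε Q hε.ne' hμpos hνsum,
    expectation_sub_klDiv_eq ε Q hε.ne' hμpos (sum_genExpDist ε Q hZ), klDiv_self, sub_zero]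
  have hgibbs : 0 ≤ klDiv ν (genExpDist ε μ Q) :=
    klDiv_nonneg (fun r => (hν r).1) (genExpDist_pos ε Q hμpos)
      (by rw [sum_genExpDist ε Q hZ, hνsum])
  gcongr
  linarith

/-- The generalized exponential mechanism maximizes expected quality minus scaled
KL divergence to the prior: for every probability distribution `ν` on `R`,
`E_{r∼ν}[Q(r)] − (2/ε)·D_KL(ν||μ) ≤ E_{r∼ν*}[Q(r)] − (2/ε)·D_KL(ν*||μ)`,
where `ν*(r) ∝ μ(r)·exp((ε/2)·Q(r))`. -/
theorem genExpMech_maximizes {R : Type*} [Fintype R] [Nonempty R]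
    (ε : ℝ) (hε : 0 < ε) (Q : R → ℝ) (μ : R → ℝ)
    (hμpos : ∀ r, 0 < μ r) (hμ1 : ∀ r, μ r ≤ 1) (hμsum : ∑ r : R, μ r = 1)
    (ν : R → ℝ) (hν : ∀ r, ν r ∈ Set.Icc (0 : ℝ) 1) (hνsum : ∑ r : R, ν r = 1) :
    (∑ r : R, ν r * Q r) - (2 / ε) * klDiv ν μ
      ≤ (∑ r : R, genExpDist ε μ Q r * Q r) - (2 / ε) * klDiv (genExpDist ε μ Q) μ :=
  genExpMech_maximizes_general ε hε Q μ hμpos ν hν hνsum
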